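/- For A a d×d symmetric positive definite matrix, the function f(Q) = -ln det Q - tr(Q^{-1} A) over symmetric positive-definite matrices Q attains its unique maximum at Q = A, with maximum value -ln det A - d. -/

import Mathlib

/-!
Factor `A = Bᴴ * B`. The congruent matrix `S = B * Q⁻¹ * Bᴴ` is positive definite with
`tr S = tr (Q⁻¹ * A)` and `det S = det A / det Q`, so the objective equals
`log det S - tr S - log det A = ∑ᵢ (log μᵢ - μᵢ) - log det A` over the eigenvalues `μᵢ` of `S`.
Since `log x - x ≤ -1` with equality only at `x = 1`, the bound `-log det A - d` holds and is
attained exactly when `S = 1`, that is, when `Q = A`.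
-/

open Matrix

lemma Real.log_sub_self_le_neg_one {x : ℝ} (hx : 0 < x) : Real.log x - x ≤ -1 := by
  linarith [Real.log_le_sub_one_of_pos hx]

lemma Real.log_sub_self_eq_neg_one_iff {x : ℝ} (hx : 0 < x) : Real.log x - x = -1 ↔ x = 1 := by
  refine ⟨fun h => by_contra fun hx1 => ?_, fun h => by simp [h]⟩
  linarith [Real.log_lt_sub_one_of_pos hx hx1]

namespace Matrix

variable {n : Type*} [Fintype n] [DecidableEq n]

namespace PosDef

variable {S : Matrix n n ℝ} (hS : S.PosDef)
include hS

lemma log_det_sub_trace_eq_sum :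
    Real.log S.det - S.trace = ∑ i, (Real.log (hS.1.eigenvalues i) - hS.1.eigenvalues i) := by
  rw [hS.1.det_eq_prod_eigenvalues, hS.1.trace_eq_sum_eigenvalues, Finset.sum_sub_distrib]
  simp only [RCLike.ofReal_real_eq_id, id]
  rw [Real.log_prod fun i _ => (hS.eigenvalues_pos i).ne']

lemma log_det_sub_trace_le : Real.log S.det - S.trace ≤ -Fintype.card n := by
  rw [hS.log_det_sub_trace_eq_sum]
  simpa using Finset.sum_le_sum fun i (_ : i ∈ Finset.univ) =>
    Real.log_sub_self_le_neg_one (hS.eigenvalues_pos i)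

lemma log_det_sub_trace_eq_neg_card_iff :
    Real.log S.det - S.trace = -Fintype.card n ↔ S = 1 := by
  refine ⟨fun h => ?_, fun h => by simp [h]⟩
  have hsum : ∑ i, (Real.log (hS.1.eigenvalues i) - hS.1.eigenvalues i) = ∑ _i : n, (-1 : ℝ) := by
    simpa [← hS.log_det_sub_trace_eq_sum] using h
  have heig : ∀ i, hS.1.eigenvalues i = 1 := fun i =>
    (Real.log_sub_self_eq_neg_one_iff (hS.eigenvalues_pos i)).mp <|
      (Finset.sum_eq_sum_iff_of_le fun i _ => Real.log_sub_self_le_neg_one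
        (hS.eigenvalues_pos i)).mp hsum i (Finset.mem_univ i)
  refine CFC.eq_one_of_spectrum_subset_one (R := ℝ) S ?_ hS.1.isSelfAdjoint
  rw [hS.1.spectrum_real_eq_range_eigenvalues]
  rintro _ ⟨i, rfl⟩
  exact heig i

end PosDef

variable {A B Q : Matrix n n ℝ}

lemma trace_mul_inv_mul_conjTranspose (hAB : A = Bᴴ * B) :
    (B * Q⁻¹ * Bᴴ).trace = (Q⁻¹ * A).trace := by
  rw [trace_mul_comm, ← mul_assoc, trace_mul_comm, hAB]

lemma det_mul_inv_mul_conjTranspose (hAB : A = Bᴴ * B) :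
    (B * Q⁻¹ * Bᴴ).det = A.det / Q.det := by
  rw [hAB, det_mul, det_mul, det_mul, det_nonsing_inv, Ring.inverse_eq_inv', div_eq_mul_inv]
  ring

lemma PosDef.mul_inv_mul_conjTranspose (hQ : Q.PosDef) (hB : IsUnit B) :
    (B * Q⁻¹ * Bᴴ).PosDef :=
  hQ.inv.mul_mul_conjTranspose_same (vecMul_injective_of_isUnit hB)

lemma eq_of_mul_inv_mul_conjTranspose_eq_one (hAB : A = Bᴴ * B) (hQ : IsUnit Q.det)
    (h : B * Q⁻¹ * Bᴴ = 1) : Q = A := by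
  have hAQ : A * Q⁻¹ = 1 := by
    rwa [hAB, mul_assoc, mul_eq_one_comm]
  rw [← nonsing_inv_nonsing_inv Q hQ, inv_eq_left_inv hAQ]

end Matrix

open scoped MatrixOrder in
/-- for `A` a `d×d` symmetric positive definite real matrix, the function
`f(Q) = -ln det Q - tr(Q⁻¹ A)` over symmetric positive-definite matrices `Q` attains
its unique maximum at `Q = A`, with maximum value `-ln det A - d`. -/
theorem matrix_log_det_trace_maximizer
    (d : ℕ) (A : Matrix (Fin d) (Fin d) ℝ) (hA : A.PosDef) :
    (∀ Q : Matrix (Fin d) (Fin d) ℝ, Q.PosDef →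
        -Real.log Q.det - (Q⁻¹ * A).trace ≤ -Real.log A.det - d) ∧
      (∀ Q : Matrix (Fin d) (Fin d) ℝ, Q.PosDef →
        -Real.log Q.det - (Q⁻¹ * A).trace = -Real.log A.det - d → Q = A) ∧
      -Real.log A.det - (A⁻¹ * A).trace = -Real.log A.det - d := by
  obtain ⟨B, hAB⟩ := CStarAlgebra.nonneg_iff_eq_star_mul_self.mp hA.posSemidef.nonneg
  rw [star_eq_conjTranspose] at hAB
  have hB : IsUnit B := by
    have hdet : IsUnit (Bᴴ.det * B.det) := by
      rw [← det_mul, ← hAB]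
      exact hA.det_pos.ne'.isUnit
    exact (isUnit_iff_isUnit_det B).mpr (IsUnit.mul_iff.mp hdet).2
  have hobj : ∀ Q : Matrix (Fin d) (Fin d) ℝ, Q.PosDef → -Real.log Q.det - (Q⁻¹ * A).trace =
      Real.log (B * Q⁻¹ * Bᴴ).det - (B * Q⁻¹ * Bᴴ).trace - Real.log A.det := fun Q hQ => by
    rw [det_mul_inv_mul_conjTranspose hAB, trace_mul_inv_mul_conjTranspose hAB,
      Real.log_div hA.det_pos.ne' hQ.det_pos.ne']
    ring
  refine ⟨fun Q hQ => ?_, fun Q hQ h => ?_, ?_⟩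
  · have hbound := (hQ.mul_inv_mul_conjTranspose hB).log_det_sub_trace_le
    rw [Fintype.card_fin] at hbound
    linarith [hobj Q hQ]
  · refine eq_of_mul_inv_mul_conjTranspose_eq_one hAB hQ.det_pos.ne'.isUnit ?_
    rw [← (hQ.mul_inv_mul_conjTranspose hB).log_det_sub_trace_eq_neg_card_iff, Fintype.card_fin]
    linarith [hobj Q hQ]
  · rw [nonsing_inv_mul A hA.det_pos.ne'.isUnit, trace_one]
    simp
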